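/- If C is a symmetric positive semidefinite N × N real matrix and the all-ones vector 1 ∈ ℝ^N lies in the range (column space) of C, then rank(Δ) = rank(C) − 1. -/

import Mathlib

open Matrix

set_option synthInstance.maxHeartbeats 1000000
set_option maxHeartbeats 1000000

/-- The set of pairs `(i,j)` with `i < j`, indexing the rows of `E`. -/
def PairIdx (N : ℕ) : Type := {p : Fin N × Fin N // p.1 < p.2}

instance (N : ℕ) : Fintype (PairIdx N) := by unfold PairIdx; infer_instance
instance (N : ℕ) : DecidableEq (PairIdx N) := by unfold PairIdx; infer_instance

/-- The pairwise-difference matrix `E`, whose row indexed by `(i,j)` with `i < j`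
is `e_i - e_j`. -/
def pairDiffMatrix (N : ℕ) : Matrix (PairIdx N) (Fin N) ℝ :=
  fun p k => (if k = p.1.1 then 1 else 0) - (if k = p.1.2 then 1 else 0)

lemma pairDiff_mulVec (N : ℕ) (v : Fin N → ℝ) (p : PairIdx N) :
    (pairDiffMatrix N).mulVec v p = v p.1.1 - v p.1.2 := by
  simp [Matrix.mulVec, dotProduct, pairDiffMatrix, sub_mul, Finset.sum_sub_distrib,
    ite_mul]

lemma ker_pairDiff (N : ℕ) (hN : 2 ≤ N) :
    LinearMap.ker (pairDiffMatrix N).mulVecLin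
      = Submodule.span ℝ {(fun _ => 1 : Fin N → ℝ)} := by
  have h0 : (0 : ℕ) < N := by omega
  apply le_antisymm
  · intro v hv
    have hv' : ∀ p : PairIdx N, v p.1.1 - v p.1.2 = 0 := by
      intro p
      have := congrFun (LinearMap.mem_ker.mp hv) p
      rwa [Matrix.mulVecLin_apply, pairDiff_mulVec] at this
    have hlt : ∀ i j : Fin N, i < j → v i = v j := by
      intro i j hij
      have := hv' ⟨(i, j), hij⟩
      linarith [this]
    have hconst : ∀ i j : Fin N, v i = v j := by
      intro i j
      rcases lt_trichotomy i j with h | h | h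
      · exact hlt i j h
      · rw [h]
      · exact (hlt j i h).symm
    have : v = (v ⟨0, h0⟩) • (fun _ => 1 : Fin N → ℝ) := by
      funext i
      simp [hconst i ⟨0, h0⟩]
    rw [this]
    exact Submodule.smul_mem _ _ (Submodule.mem_span_singleton_self _)
  · rw [Submodule.span_le, Set.singleton_subset_iff]
    simp only [SetLike.mem_coe, LinearMap.mem_ker, Matrix.mulVecLin_apply]
    funext p
    simp [pairDiff_mulVec]

open scoped MatrixOrder in
lemma exists_sym_sqrt_of_posSemidef {N : ℕ} (C : Matrix (Fin N) (Fin N) ℝ) (hC : C.PosSemidef) :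
    ∃ S : Matrix (Fin N) (Fin N) ℝ, Sᵀ = S ∧ S * S = C := by
  refine ⟨CFC.sqrt C, ?_, CFC.sqrt_mul_sqrt_self C (nonneg_iff_posSemidef.mpr hC)⟩
  have h := (nonneg_iff_posSemidef.mp (CFC.sqrt_nonneg C)).1
  rwa [Matrix.IsHermitian, conjTranspose_eq_transpose_of_trivial] at h

/-- If `C` is symmetric positive semidefinite and the all-ones
vector lies in the range (column space) of `C`, then `rank(Δ) = rank(C) − 1`,
where `Δ = E C Eᵀ`. -/
theorem rank_Delta_of_ones_mem_range (N : ℕ) (hN : 2 ≤ N)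
    (C : Matrix (Fin N) (Fin N) ℝ) (hC : C.PosSemidef)
    (hone : (fun _ => 1 : Fin N → ℝ) ∈ LinearMap.range C.mulVecLin) :
    (pairDiffMatrix N * C * (pairDiffMatrix N)ᵀ).rank = C.rank - 1 := by
  have h0 : (0 : ℕ) < N := by omega
  set E := pairDiffMatrix N with hE
  obtain ⟨S, hSsym, hSS⟩ := exists_sym_sqrt_of_posSemidef C hC
  -- Δ = (E S)(E S)ᵀ
  have hΔ : E * C * Eᵀ = (E * S) * (E * S)ᵀ := by
    rw [Matrix.transpose_mul, hSsym, ← hSS]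
    simp [Matrix.mul_assoc]
  rw [hΔ, Matrix.rank_self_mul_transpose]
  -- 1 ∈ range S
  have h1mem : (fun _ => 1 : Fin N → ℝ) ∈ LinearMap.range S.mulVecLin := by
    obtain ⟨x, hx⟩ := hone
    refine ⟨S.mulVecLin x, ?_⟩
    rw [← hSS, Matrix.mulVecLin_mul] at hx
    exact hx
  set W := LinearMap.range S.mulVecLin with hW
  -- kernel of E
  have hker : LinearMap.ker E.mulVecLin = Submodule.span ℝ {(fun _ => 1 : Fin N → ℝ)} :=
    ker_pairDiff N hN
  have hle : LinearMap.ker E.mulVecLin ≤ W := by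
    rw [hker, Submodule.span_le, Set.singleton_subset_iff]
    exact h1mem
  -- rank-nullity on the restriction of E to W
  have hrn := LinearMap.finrank_range_add_finrank_ker (E.mulVecLin.domRestrict W)
  rw [LinearMap.range_domRestrict, LinearMap.ker_domRestrict] at hrn
  -- finrank of the kernel part is 1
  have hone_ne : (fun _ => 1 : Fin N → ℝ) ≠ 0 := by
    intro h
    have := congrFun h ⟨0, h0⟩
    simp at this
  have hk1 : Module.finrank ℝ (LinearMap.ker E.mulVecLin) = 1 := by
    rw [hker]
    exact finrank_span_singleton hone_ne
  have hcomap : Module.finrank ℝ ((LinearMap.ker E.mulVecLin).comap W.subtype) = 1 := by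
    exact (Submodule.comapSubtypeEquivOfLe hle).finrank_eq.trans hk1
  -- finrank W = rank S = rank C
  have hWrank : Module.finrank ℝ W = C.rank := by
    have h1 : C.rank = (Sᵀ * S).rank := by rw [hSsym, hSS]
    rw [h1, Matrix.rank_transpose_mul_self]
    rfl
  -- rank (E * S) = finrank (map of W under E)
  have hES : (E * S).rank = Module.finrank ℝ (W.map E.mulVecLin) := by
    unfold Matrix.rank
    rw [Matrix.mulVecLin_mul, LinearMap.range_comp]
  rw [hES]
  rw [hcomap, hWrank] at hrn
  omega
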